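/- For any $p \geq 1$ and $n \geq 1$, the element $c^{-n}_p := \sum_{j=0}^{p} c_{p-j} e_j(-y_1, \ldots, -y_n)$ lies in the ideal of $\Gamma[x_1,\ldots,x_n,y_1,\ldots,y_n]$ generated by $\{{}^n c^n_q : q \geq 1\}$ whenever $p \geq n+1$. -/

import Mathlib

noncomputable section
open MvPolynomial

/-- The element `c_p` of the free polynomial ring `ℤ[c_1, c_2, …]`, with the
conventions `c_0 = 1` and `c_p = 0` for `p < 0`. -/
def cFree : ℤ → MvPolynomial ℕ ℤ := fun p =>
  if p ≤ 0 then (if p = 0 then 1 else 0) else X (p.toNat - 1)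

/-- The relation `c_p² + 2 ∑_{i=1}^p (-1)^i c_{p+i} c_{p-i}`. -/
def relC (p : ℕ) : MvPolynomial ℕ ℤ :=
  cFree (p : ℤ) ^ 2 +
    2 * ∑ i ∈ Finset.Icc 1 p,
      (-1 : MvPolynomial ℕ ℤ) ^ i * cFree ((p : ℤ) + i) * cFree ((p : ℤ) - i)

/-- The ideal generated by the relations `relC p` for `p ≥ 1`. -/
def IGam : Ideal (MvPolynomial ℕ ℤ) := Ideal.span {f | ∃ p : ℕ, 1 ≤ p ∧ f = relC p}

/-- The ring `Γ`. -/
abbrev GammaR := MvPolynomial ℕ ℤ ⧸ IGam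

/-- The class of `c_p` in `Γ`. -/
def cQ : ℤ → GammaR := fun p => Ideal.Quotient.mk IGam (cFree p)

/-- The elementary symmetric polynomial `e_j` evaluated at the family `v i`,
`i ∈ s`. -/
def esymF {R : Type*} [CommRing R] {σ : Type*} [DecidableEq σ]
    (s : Finset σ) (v : σ → R) (j : ℕ) : R :=
  ∑ t ∈ Finset.powersetCard j s, ∏ i ∈ t, v i

/-- The complete homogeneous symmetric polynomial `h_j` evaluated at the family
`v i`, `i ∈ s`. -/
def hsymF {R : Type*} [CommRing R] {σ : Type*} [DecidableEq σ]
    (s : Finset σ) (v : σ → R) (j : ℕ) : R :=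
  ∑ m ∈ Finset.sym s j, (m.1.map v).prod

/-- The ring `Γ[x_1,…,x_n,y_1,…,y_n]`. -/
abbrev Rng (n : ℕ) := MvPolynomial (Fin n ⊕ Fin n) GammaR

/-- The variable `x_i`. -/
def xv (n : ℕ) (i : Fin n) : Rng n := X (Sum.inl i)

/-- The variable `y_i`. -/
def yv (n : ℕ) (i : Fin n) : Rng n := X (Sum.inr i)

/-- `ⁿcⁿ_p = ∑_{i,j} c_{p-i-j} e_i(X_n) h_j(-Y_n)`. -/
def ncn (n p : ℕ) : Rng n :=
  ∑ i ∈ Finset.range (p + 1), ∑ j ∈ Finset.range (p + 1),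
    C (cQ ((p : ℤ) - i - j)) * esymF Finset.univ (xv n) i *
      hsymF Finset.univ (fun t => -(yv n t)) j

/-- `c^{-n}_p = ∑_j c_{p-j} e_j(-Y_n)`. -/
def cnegn (n p : ℕ) : Rng n :=
  ∑ j ∈ Finset.range (p + 1),
    C (cQ ((p : ℤ) - j)) * esymF Finset.univ (fun t => -(yv n t)) j

/-! The defining relations of `Γ` say exactly that `c(t) c(-t) = 1` for
`c(t) = ∑ c_k t^k`. Since `∑ e_j(v) t^j = ∏ (1 + v_i t)` and `∑ h_j(v) t^j = ∏ (1 - v_i t)⁻¹`,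
the generating series of `ⁿcⁿ` is `c(t) E_X(t) H_{-Y}(t)` and that of `c^{-n}` is
`c(t) E_{-Y}(t)`; substituting `-t` in the latter and multiplying gives `E_X(t)`, a polynomial
of degree `n`. Modulo the ideal generated by the `ⁿcⁿ_q` with `q ≥ 1` the first series
becomes `1`, so `(-1)^p c^{-n}_p ≡ e_p(X) = 0` for `p > n`. -/

open Finset PowerSeries

section SymmetricFunctions

variable {R σ : Type*} [CommRing R] [DecidableEq σ]

lemma esymF_of_card_lt {s : Finset σ} {j : ℕ} (h : #s < j) (v : σ → R) : esymF s v j = 0 := by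
  rw [esymF, powersetCard_eq_empty.2 h, sum_empty]

lemma esymF_insert {a : σ} {s : Finset σ} (ha : a ∉ s) (v : σ → R) (j : ℕ) :
    esymF (insert a s) v (j + 1) = esymF s v (j + 1) + v a * esymF s v j := by
  unfold esymF
  rw [powersetCard_succ_insert ha, sum_union, sum_image, mul_sum]
  · congr 1
    refine sum_congr rfl fun t ht => ?_
    rw [prod_insert fun h => ha ((mem_powersetCard.1 ht).1 h)]
  · intro x hx y hy hxy
    have hax : a ∉ x := fun h => ha ((mem_powersetCard.1 hx).1 h)
    have hay : a ∉ y := fun h => ha ((mem_powersetCard.1 hy).1 h)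
    rw [← erase_insert hax, ← erase_insert hay, hxy]
  · refine disjoint_right.2 fun t ht ht' => ?_
    obtain ⟨u, -, rfl⟩ := mem_image.1 ht
    exact ha ((mem_powersetCard.1 ht').1 (mem_insert_self a u))

lemma mk_esymF (s : Finset σ) (v : σ → R) :
    mk (esymF s v) = ∏ i ∈ s, (1 + PowerSeries.C (v i) * PowerSeries.X) := by
  induction s using Finset.induction with
  | empty =>
    ext (_ | j)
    · simp [esymF]
    · simp [esymF_of_card_lt (s := ∅) (Nat.succ_pos j), PowerSeries.coeff_one]
  | @insert a s ha ih =>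
    rw [prod_insert ha, ← ih]
    ext (_ | j)
    · simp [esymF]
    · rw [add_mul, one_mul, map_add, mul_assoc, PowerSeries.coeff_C_mul, coeff_succ_X_mul,
        coeff_mk, coeff_mk, coeff_mk, esymF_insert ha]

lemma hsymF_insert {a : σ} {s : Finset σ} (ha : a ∉ s) (v : σ → R) (j : ℕ) :
    hsymF (insert a s) v j = ∑ k ∈ range (j + 1), v a ^ k * hsymF s v (j - k) := by
  unfold hsymF
  rw [← sum_coe_sort ((insert a s).sym j), ← (symInsertEquiv ha).symm.sum_comp,
    Fintype.sum_sigma, ← Fin.sum_univ_eq_sum_range]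
  refine Fintype.sum_congr _ _ fun k => ?_
  rw [mul_sum, ← sum_coe_sort (s.sym (j - k))]
  refine Fintype.sum_congr _ _ fun m => ?_
  simp [Sym.coe_fill, Multiset.map_add, Multiset.prod_add, mul_comm, Sym.coe_replicate]

lemma mk_hsymF (s : Finset σ) (v : σ → R) :
    mk (hsymF s v) = ∏ i ∈ s, mk (v i ^ ·) := by
  induction s using Finset.induction with
  | empty =>
    ext (_ | j)
    · simp [hsymF, Sym.eq_nil_of_card_zero]
    · simp [hsymF, PowerSeries.coeff_one]
  | @insert a s ha ih =>
    ext j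
    rw [prod_insert ha, ← ih, coeff_mk, hsymF_insert ha, PowerSeries.coeff_mul,
      Nat.sum_antidiagonal_eq_sum_range_succ (fun k l => coeff k (mk (v a ^ ·)) * coeff l _)]
    simp only [coeff_mk]

lemma rescale_C (a r : R) : rescale a (PowerSeries.C r) = PowerSeries.C r := by
  ext (_ | n) <;> simp [coeff_rescale, PowerSeries.coeff_C]

lemma mk_pow_mul_one_sub (r : R) :
    mk (r ^ ·) * (1 - PowerSeries.C r * PowerSeries.X) = 1 := by
  have h := congrArg (rescale r) (mk_one_mul_one_sub_eq_one (S := R))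
  simpa [rescale_mk, rescale_X] using h

lemma mk_hsymF_mul_rescale_mk_esymF (s : Finset σ) (v : σ → R) :
    mk (hsymF s v) * rescale (-1) (mk (esymF s v)) = 1 := by
  simp only [mk_hsymF, mk_esymF, map_prod, map_add, map_one, map_mul, rescale_X, rescale_C,
    ← prod_mul_distrib]
  refine prod_eq_one fun i _ => ?_
  simpa [sub_eq_add_neg] using mk_pow_mul_one_sub (v i)

end SymmetricFunctions

lemma sum_range_two_mul_add_one {M : Type*} [AddCommMonoid M] (g : ℕ → M) (p : ℕ) :
    ∑ k ∈ range (2 * p + 1), g k = g p + ∑ i ∈ range p, (g (p - 1 - i) + g (p + 1 + i)) := by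
  rw [show 2 * p + 1 = p + 1 + p by ring, sum_range_add, sum_range_succ, sum_add_distrib,
    sum_range_reflect g p]
  abel

lemma coeff_mul_mk_eq_sum_range {R : Type*} [CommRing R] {f : ℤ → R} (hf : ∀ m < 0, f m = 0)
    {φ : PowerSeries R} (hφ : ∀ k : ℕ, coeff k φ = f k) (g : ℕ → R) {p N : ℕ} (hpN : p ≤ N) :
    coeff p (φ * mk g) = ∑ i ∈ range (N + 1), f (p - i) * g i := by
  rw [PowerSeries.coeff_mul, ← Nat.sum_antidiagonal_swap]
  simp only [Prod.fst_swap, Prod.snd_swap]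
  rw [Nat.sum_antidiagonal_eq_sum_range_succ (fun i j => coeff j φ * coeff i (mk g))]
  refine (sum_congr rfl fun i hi => ?_).trans
    (sum_subset (range_subset_range.2 (by omega)) fun i _ hip => ?_)
  · rw [coeff_mk, hφ, Nat.cast_sub (Nat.le_of_lt_succ (mem_range.1 hi))]
  · rw [hf _ (by simp at hip; omega), zero_mul]

section Gamma

lemma cQ_zero : cQ 0 = 1 := by
  simp [cQ, cFree]

lemma cQ_of_neg {m : ℤ} (hm : m < 0) : cQ m = 0 := by
  rw [cQ, cFree, if_pos hm.le, if_neg hm.ne, map_zero]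

lemma cQ_sq_add_two_mul_sum_eq_zero {p : ℕ} (hp : 1 ≤ p) :
    cQ p ^ 2 + 2 * ∑ i ∈ Icc 1 p, (-1) ^ i * cQ (p + i) * cQ (p - i) = 0 := by
  have h : Ideal.Quotient.mk IGam (relC p) = 0 :=
    Ideal.Quotient.eq_zero_iff_mem.2 (Ideal.subset_span ⟨p, hp, rfl⟩)
  simpa [relC, cQ, map_ofNat] using h

def cSeries : PowerSeries GammaR := mk fun k => cQ k

lemma sum_antidiagonal_cQ_of_odd {m : ℕ} (hm : Odd m) :
    ∑ x ∈ antidiagonal m, cQ x.1 * ((-1) ^ x.2 * cQ x.2) = 0 := by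
  refine sum_involution (fun x _ => x.swap) (fun x hx => ?_) (fun x hx _ hswap => ?_)
    (fun x hx => by simpa [add_comm] using hx) (fun x _ => x.swap_swap)
  · rw [HasAntidiagonal.mem_antidiagonal] at hx
    have h : (-1 : GammaR) ^ x.1 = (-1) ^ (x.2 + 1) := by
      refine neg_one_pow_congr (R := GammaR) ?_
      rw [Nat.odd_iff] at hm
      simp only [Nat.even_iff]
      omega
    rw [pow_succ] at h
    simp only [Prod.fst_swap, Prod.snd_swap, h]
    ring
  · rw [HasAntidiagonal.mem_antidiagonal] at hx
    have hdiag : x.1 = x.2 := congrArg Prod.snd hswap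
    exact Nat.not_even_iff_odd.2 hm ⟨x.1, by omega⟩

lemma sum_antidiagonal_cQ_of_even {p : ℕ} (hp : 1 ≤ p) :
    ∑ x ∈ antidiagonal (2 * p), cQ x.1 * ((-1) ^ x.2 * cQ x.2) = 0 := by
  rw [Nat.sum_antidiagonal_eq_sum_range_succ (fun a b => cQ a * ((-1) ^ b * cQ b)),
    sum_range_two_mul_add_one]
  have hmid : cQ p * ((-1) ^ (2 * p - p) * cQ ↑(2 * p - p)) = (-1) ^ p * cQ p ^ 2 := by
    rw [show 2 * p - p = p by omega]
    ring
  -- the terms `k = p - (i + 1)` and `k = p + (i + 1)` coincide, giving the factor `2`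
  have hpair : ∀ i ∈ range p,
      cQ ↑(p - 1 - i) * ((-1) ^ (2 * p - (p - 1 - i)) * cQ ↑(2 * p - (p - 1 - i))) +
        cQ ↑(p + 1 + i) * ((-1) ^ (2 * p - (p + 1 + i)) * cQ ↑(2 * p - (p + 1 + i))) =
      (-1) ^ p * (2 * ((-1) ^ (i + 1) * cQ (p + ↑(i + 1)) * cQ (p - ↑(i + 1)))) := by
    intro i hi
    have hip : i < p := mem_range.1 hi
    rw [show 2 * p - (p - 1 - i) = p + (i + 1) by omega,
      show 2 * p - (p + 1 + i) = p - 1 - i by omega,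
      show (-1 : GammaR) ^ (p - 1 - i) = (-1) ^ (p + (i + 1)) by
        refine neg_one_pow_congr (R := GammaR) ?_; simp only [Nat.even_iff]; omega]
    rw [show ((p - 1 - i : ℕ) : ℤ) = p - ↑(i + 1) by omega,
      show ((p + (i + 1) : ℕ) : ℤ) = p + ↑(i + 1) by omega,
      show ((p + 1 + i : ℕ) : ℤ) = p + ↑(i + 1) by omega, pow_add]
    ring
  have hreindex : ∑ i ∈ range p, (-1) ^ (i + 1) * cQ (p + ↑(i + 1)) * cQ (p - ↑(i + 1)) =
      ∑ i ∈ Icc 1 p, (-1) ^ i * cQ (p + i) * cQ (p - i) := by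
    rw [← Ico_add_one_right_eq_Icc, sum_Ico_eq_sum_range, add_tsub_cancel_right]
    simp only [add_comm 1]
  rw [hmid, sum_congr rfl hpair, ← mul_sum, ← mul_sum, ← mul_add, hreindex,
    cQ_sq_add_two_mul_sum_eq_zero hp, mul_zero]

lemma cSeries_mul_rescale_cSeries : cSeries * rescale (-1) cSeries = 1 := by
  ext m
  rw [cSeries, rescale_mk, PowerSeries.coeff_mul, PowerSeries.coeff_one]
  simp only [coeff_mk]
  rcases Nat.even_or_odd m with ⟨p, rfl⟩ | hm
  · rcases p with _ | p
    · simp [cQ_zero]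
    · rw [← two_mul, sum_antidiagonal_cQ_of_even (Nat.succ_pos p), if_neg (by omega)]
  · rw [sum_antidiagonal_cQ_of_odd hm, if_neg (by rintro rfl; simp at hm)]

end Gamma

section GeneratingSeries

variable (n : ℕ)

lemma coeff_map_C_cSeries (k : ℕ) :
    coeff k (PowerSeries.map (MvPolynomial.C : GammaR →+* Rng n) cSeries) =
      MvPolynomial.C (cQ k) := by
  simp [cSeries]

lemma coeff_map_C_cSeries_mul_mk (g : ℕ → Rng n) {p N : ℕ} (hpN : p ≤ N) :
    coeff p (PowerSeries.map MvPolynomial.C cSeries * mk g) =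
      ∑ i ∈ range (N + 1), MvPolynomial.C (cQ (p - i)) * g i :=
  coeff_mul_mk_eq_sum_range (f := fun m => MvPolynomial.C (cQ m))
    (fun m hm => by rw [cQ_of_neg hm, map_zero]) (coeff_map_C_cSeries n) g hpN

lemma mk_cnegn :
    mk (cnegn n) = PowerSeries.map MvPolynomial.C cSeries * mk (esymF univ fun t => -yv n t) := by
  refine PowerSeries.ext fun p => ?_
  rw [coeff_map_C_cSeries_mul_mk n _ le_rfl, coeff_mk, cnegn]

lemma mk_ncn :
    mk (ncn n) = PowerSeries.map MvPolynomial.C cSeries * mk (esymF univ (xv n)) *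
      mk (hsymF univ fun t => -yv n t) := by
  refine PowerSeries.ext fun p => ?_
  rw [mul_comm, PowerSeries.coeff_mul,
    Nat.sum_antidiagonal_eq_sum_range_succ (fun a b => coeff a _ * coeff b _), coeff_mk, ncn,
    sum_comm]
  refine sum_congr rfl fun j hj => ?_
  rw [coeff_map_C_cSeries_mul_mk n _ (Nat.sub_le p j), coeff_mk, mul_sum]
  refine sum_congr rfl fun i _ => ?_
  rw [show (p : ℤ) - i - j = ((p - j : ℕ) : ℤ) - i by have := mem_range.1 hj; omega]
  ring

lemma mk_ncn_mul_rescale_mk_cnegn :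
    mk (ncn n) * rescale (-1) (mk (cnegn n)) = mk (esymF univ (xv n)) := by
  have hc : PowerSeries.map MvPolynomial.C cSeries *
      rescale (-1) (PowerSeries.map MvPolynomial.C cSeries) = (1 : PowerSeries (Rng n)) := by
    rw [← map_one MvPolynomial.C, ← map_neg, rescale_map, ← map_mul, cSeries_mul_rescale_cSeries,
      map_one]
  have hy := mk_hsymF_mul_rescale_mk_esymF univ fun t => -yv n t
  rw [mk_ncn, mk_cnegn, map_mul]
  calc _ = (PowerSeries.map MvPolynomial.C cSeries *
          rescale (-1) (PowerSeries.map MvPolynomial.C cSeries)) * mk (esymF univ (xv n)) *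
        (mk (hsymF univ fun t => -yv n t) * rescale (-1) (mk (esymF univ fun t => -yv n t))) := by
        ring
    _ = _ := by rw [hc, hy, one_mul, mul_one]

lemma ncn_zero : ncn n 0 = 1 := by
  simp [ncn, esymF, hsymF, cQ_zero, Sym.eq_nil_of_card_zero]

end GeneratingSeries

/-- For `p ≥ n+1`, the element `c^{-n}_p` lies in the ideal of `Γ[X_n, Y_n]`
generated by the elements `ⁿcⁿ_q`, `q ≥ 1`. -/
theorem cnegn_mem_ideal (n p : ℕ) (hp : n + 1 ≤ p) :
    cnegn n p ∈ Ideal.span {f : Rng n | ∃ q : ℕ, 1 ≤ q ∧ f = ncn n q} := by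
  set I := Ideal.span {f : Rng n | ∃ q : ℕ, 1 ≤ q ∧ f = ncn n q}
  have hN : PowerSeries.map (Ideal.Quotient.mk I) (mk (ncn n)) = 1 := by
    refine PowerSeries.ext fun q => ?_
    rcases q with _ | q
    · simp [ncn_zero]
    · have hq : ncn n (q + 1) ∈ I := Ideal.subset_span ⟨q + 1, by omega, rfl⟩
      simpa [PowerSeries.coeff_one, Ideal.Quotient.eq_zero_iff_mem] using hq
  have h := congrArg (fun f => coeff p (PowerSeries.map (Ideal.Quotient.mk I) f))
    (mk_ncn_mul_rescale_mk_cnegn n)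
  simp only [map_mul, hN, one_mul, PowerSeries.coeff_map, coeff_rescale, coeff_mk, map_pow,
    map_neg, map_one, map_zero, esymF_of_card_lt (s := (univ : Finset (Fin n))) (by simpa using hp),
    neg_one_pow_mul_eq_zero_iff] at h
  exact Ideal.Quotient.eq_zero_iff_mem.1 h
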